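/- Suppose every job j ∈ J satisfies the no-bottleneck assumption d_j ≤ c_min. Then J can be partitioned into at most 12r feasible rounds, where r is the congestion of the instance; in particular, since every Round-UFP packing uses at least r rounds, there is a packing using at most 12 times the optimal number of rounds. -/

import Mathlib

open scoped Classical

namespace PathUFP

variable {ι : Type*}

/-- Job `i` uses the edge `e_{k+1}` (for `k : Fin m`, edges being 1-indexed
`e_1, …, e_m`) iff `s_i < k + 1 ≤ t_i`, i.e. iff `s_i ≤ k < t_i`. -/
def uses (s t : ι → ℕ) {m : ℕ} (i : ι) (k : Fin m) : Prop :=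
  s i ≤ (k : ℕ) ∧ (k : ℕ) < t i

/-- The load of edge `e_{k+1}`: total demand of the jobs using it. -/
noncomputable def load [Fintype ι] (s t : ι → ℕ) (d : ι → ℝ) {m : ℕ} (k : Fin m) : ℝ :=
  ∑ i : ι, if uses s t i k then d i else 0

/-- The congestion `r = max_k ⌈l_k / c_k⌉` of the instance. -/
noncomputable def congestion [Fintype ι] (s t : ι → ℕ) (d : ι → ℝ) {m : ℕ}
    (hm : 0 < m) (c : Fin m → ℝ) : ℤ :=
  Finset.univ.sup' ⟨⟨0, hm⟩, Finset.mem_univ _⟩ fun k => ⌈load s t d k / c k⌉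

/-- The minimum edge capacity. -/
noncomputable def cmin {m : ℕ} (hm : 0 < m) (c : Fin m → ℝ) : ℝ :=
  Finset.univ.inf' ⟨⟨0, hm⟩, Finset.mem_univ _⟩ c

/-- `f` is a Round-UFP packing of the jobs into `K` feasible rounds: on each round and
each edge, the total demand of the jobs of that round using that edge is at most the
capacity of the edge. -/
def IsPacking [Fintype ι] (s t : ι → ℕ) (d : ι → ℝ) {m : ℕ} (c : Fin m → ℝ)
    {K : ℕ} (f : ι → Fin K) : Prop :=
  ∀ (r : Fin K) (k : Fin m),
    (∑ i : ι, if f i = r ∧ uses s t i k then d i else 0) ≤ c k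

end PathUFP


namespace RoundUFPProof

def covp (p : ℕ × ℕ) (j : ℕ) : Prop := p.1 ≤ j ∧ j < p.2

noncomputable def icov (p : ℕ × ℕ) (j : ℕ) : ℕ := if covp p j then 1 else 0

noncomputable def covc (M : Multiset (ℕ × ℕ)) (j : ℕ) : ℕ :=
  (M.filter (fun p => covp p j)).card

noncomputable def deg (M : Multiset (ℕ × ℕ)) (v : ℕ) : ℕ :=
  (M.filter (fun p => p.1 = v ∨ p.2 = v)).card

noncomputable def ideg (p : ℕ × ℕ) (v : ℕ) : ℕ := if p.1 = v ∨ p.2 = v then 1 else 0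

@[simp] lemma covc_zero (j : ℕ) : covc 0 j = 0 := by simp [covc]

@[simp] lemma deg_zero (v : ℕ) : deg 0 v = 0 := by simp [deg]

lemma covc_cons (p : ℕ × ℕ) (M : Multiset (ℕ × ℕ)) (j : ℕ) :
    covc (p ::ₘ M) j = covc M j + icov p j := by
  simp only [covc, Multiset.filter_cons, icov]
  split_ifs <;> simp [Nat.add_comm]

lemma deg_cons (p : ℕ × ℕ) (M : Multiset (ℕ × ℕ)) (v : ℕ) :
    deg (p ::ₘ M) v = deg M v + ideg p v := by
  simp only [deg, Multiset.filter_cons, ideg]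
  split_ifs <;> simp [Nat.add_comm]

lemma covc_add (M N : Multiset (ℕ × ℕ)) (j : ℕ) :
    covc (M + N) j = covc M j + covc N j := by
  simp [covc, Multiset.filter_add]

lemma deg_add (M N : Multiset (ℕ × ℕ)) (v : ℕ) :
    deg (M + N) v = deg M v + deg N v := by
  simp [deg, Multiset.filter_add]

lemma covc_erase {M : Multiset (ℕ × ℕ)} {g : ℕ × ℕ} (hg : g ∈ M) (j : ℕ) :
    covc M j = covc (M.erase g) j + icov g j := by
  conv_lhs => rw [← Multiset.cons_erase hg]
  rw [covc_cons]

lemma icov_split {a v b : ℕ} (hav : a ≤ v) (hvb : v ≤ b) (j : ℕ) :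
    icov (a, b) j = icov (a, v) j + icov (v, b) j := by
  simp only [icov, covp]
  by_cases h1 : a ≤ j <;> by_cases h2 : j < v <;> by_cases h3 : v ≤ j <;> by_cases h4 : j < b <;> simp only [h1, h2, h3, h4, true_and, and_true, false_and, and_false, if_true, if_false] <;> omega

/-- reconstruction helper, "concat" shape : `icov g = icov u + icov w`. -/
lemma reconA {E₁ P' Q' : Multiset (ℕ × ℕ)} {g u w : ℕ × ℕ}
    (hg : g ∈ P') (hE' : g ::ₘ E₁ = P' + Q')
    (hcov : ∀ j, covc P' j = covc Q' j)
    (hsplit : ∀ j, icov g j = icov u j + icov w j) :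
    ∃ P Q, u ::ₘ w ::ₘ E₁ = P + Q ∧ ∀ j, covc P j = covc Q j := by
  have hE₁ : E₁ = P'.erase g + Q' := by
    have h1 : E₁ = (P' + Q').erase g := by
      rw [← hE']; exact (Multiset.erase_cons_head g E₁).symm
    rw [h1, Multiset.erase_add_left_pos _ hg]
  refine ⟨u ::ₘ w ::ₘ P'.erase g, Q', ?_, ?_⟩
  · rw [hE₁, ← Multiset.cons_add, ← Multiset.cons_add]
  · intro j
    have h2 := covc_erase hg j
    rw [covc_cons, covc_cons, ← hcov j, h2, hsplit j]
    ring

/-- reconstruction helper, "sibling" shape : `icov u = icov w + icov g`. -/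
lemma reconB {E₁ P' Q' : Multiset (ℕ × ℕ)} {g u w : ℕ × ℕ}
    (hg : g ∈ P') (hE' : g ::ₘ E₁ = P' + Q')
    (hcov : ∀ j, covc P' j = covc Q' j)
    (hsplit : ∀ j, icov u j = icov w j + icov g j) :
    ∃ P Q, u ::ₘ w ::ₘ E₁ = P + Q ∧ ∀ j, covc P j = covc Q j := by
  have hE₁ : E₁ = P'.erase g + Q' := by
    have h1 : E₁ = (P' + Q').erase g := by
      rw [← hE']; exact (Multiset.erase_cons_head g E₁).symm
    rw [h1, Multiset.erase_add_left_pos _ hg]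
  refine ⟨u ::ₘ P'.erase g, w ::ₘ Q', ?_, ?_⟩
  · rw [hE₁]
    simp only [Multiset.cons_add, Multiset.add_cons]
    rw [Multiset.cons_swap]
  · intro j
    have h2 := covc_erase hg j
    rw [covc_cons, covc_cons, ← hcov j, h2, hsplit j]
    ring

theorem zeroSum : ∀ (n : ℕ) (E : Multiset (ℕ × ℕ)), Multiset.card E ≤ n →
    (∀ p ∈ E, p.1 < p.2) → (∀ v, Even (deg E v)) →
    ∃ P Q, E = P + Q ∧ ∀ j, covc P j = covc Q j := by
  intro n
  induction n with
  | zero =>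
    intro E hcard _ _
    refine ⟨0, 0, ?_, fun j => rfl⟩
    simpa using (Multiset.card_eq_zero.mp (Nat.le_zero.mp hcard))
  | succ n ih =>
    intro E hcard hvalid heven
    rcases Multiset.empty_or_exists_mem E with hE | ⟨e, he⟩
    · exact ⟨0, 0, by simp [hE], fun j => rfl⟩
    obtain ⟨E₀, rfl⟩ := Multiset.exists_cons_of_mem he
    have hvb : e.1 < e.2 := hvalid e he
    -- find f in E₀ with endpoint e.1
    have hdegv : Even (deg (e ::ₘ E₀) e.1) := heven e.1
    rw [deg_cons] at hdegv
    have hdege : ideg e e.1 = 1 := by simp [ideg]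
    rw [hdege] at hdegv
    have hne : deg E₀ e.1 ≠ 0 := by
      intro h0
      rw [h0] at hdegv
      simpa using hdegv
    obtain ⟨f, hfmem⟩ := Multiset.card_pos_iff_exists_mem.mp (Nat.pos_of_ne_zero hne)
    have hf : f.1 = e.1 ∨ f.2 = e.1 := (Multiset.mem_filter.mp hfmem).2
    have hfE₀ : f ∈ E₀ := (Multiset.mem_filter.mp hfmem).1
    obtain ⟨E₁, rfl⟩ := Multiset.exists_cons_of_mem hfE₀
    have hfv : f.1 < f.2 := hvalid f (by simp)
    have hcard₁ : Multiset.card E₁ + 2 ≤ n + 1 := by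
      simpa [Multiset.card_cons] using hcard
    have hvalid₁ : ∀ p ∈ E₁, p.1 < p.2 := fun p hp => hvalid p (by simp [hp])
    -- degree decomposition of E
    have hdegE : ∀ w, deg (e ::ₘ f ::ₘ E₁) w = deg E₁ w + ideg e w + ideg f w := by
      intro w; rw [deg_cons, deg_cons]; ring
    rcases hf with hf1 | hf2
    · -- sibling : f.1 = e.1
      rcases lt_trichotomy e.2 f.2 with hlt | heq | hgt
      · -- e shorter : g = (e.2, f.2)
        set g : ℕ × ℕ := (e.2, f.2) with hg
        have hEcard : Multiset.card (g ::ₘ E₁) ≤ n := by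
          simp only [Multiset.card_cons]; omega
        have hEvalid : ∀ p ∈ g ::ₘ E₁, p.1 < p.2 := by
          intro p hp
          rcases Multiset.mem_cons.mp hp with rfl | hp
          · exact hlt
          · exact hvalid₁ p hp
        have hEeven : ∀ w, Even (deg (g ::ₘ E₁) w) := by
          intro w
          have h1 := heven w
          rw [hdegE w] at h1
          rw [deg_cons]
          have h2 : ideg e w + ideg f w = ideg g w + (if e.1 = w then 2 else 0) := by
            simp only [ideg, hg, hf1]
            split_ifs <;> omega
          rcases Nat.even_or_odd (deg E₁ w + ideg g w) with h | h
          · exact h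
          · exfalso
            have : deg E₁ w + ideg e w + ideg f w = deg E₁ w + ideg g w + (if e.1 = w then 2 else 0) := by
              omega
            rw [this] at h1
            split_ifs at h1 with hw
            · rw [Nat.even_add] at h1
              simp at h1
              exact (Nat.not_even_iff_odd.mpr h) h1
            · rw [Nat.add_zero] at h1
              exact (Nat.not_even_iff_odd.mpr h) h1
        obtain ⟨P', Q', hE', hcov'⟩ := ih (g ::ₘ E₁) hEcard hEvalid hEeven
        have hsplit : ∀ j, icov f j = icov e j + icov g j := by
          intro j
          have := icov_split (a := f.1) (v := e.2) (b := f.2) (by omega) (by omega) j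
          rw [hg]
          have he' : (f.1, e.2) = e := by
            rw [hf1]
          rw [he'] at this
          simpa using this
        have hgmem : g ∈ P' + Q' := by rw [← hE']; simp
        rcases Multiset.mem_add.mp hgmem with hgP | hgQ
        · obtain ⟨P, Q, hPQ, hc⟩ := reconB hgP hE' hcov' hsplit
          refine ⟨Q, P, ?_, fun j => (hc j).symm⟩
          rw [← Multiset.cons_swap, hPQ, add_comm]
        · obtain ⟨P, Q, hPQ, hc⟩ := reconB hgQ (by rw [hE', add_comm]) (fun j => (hcov' j).symm) hsplit
          refine ⟨P, Q, ?_, hc⟩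
          rw [← Multiset.cons_swap, hPQ]
      · -- identical pair : f = e
        have hfe : f = e := Prod.ext hf1 heq.symm
        subst hfe
        have hEcard : Multiset.card E₁ ≤ n := by omega
        have hEeven : ∀ w, Even (deg E₁ w) := by
          intro w
          have h1 := heven w
          rw [hdegE w] at h1
          rcases Nat.even_or_odd (deg E₁ w) with h | h
          · exact h
          · exfalso
            have : deg E₁ w + ideg f w + ideg f w = deg E₁ w + 2 * ideg f w := by ring
            rw [this, Nat.even_add] at h1
            simp at h1
            exact (Nat.not_even_iff_odd.mpr h) h1
        obtain ⟨P', Q', hE', hcov'⟩ := ih E₁ hEcard hvalid₁ hEeven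
        refine ⟨f ::ₘ P', f ::ₘ Q', ?_, ?_⟩
        · rw [hE']
          simp only [Multiset.cons_add, Multiset.add_cons]
        · intro j
          rw [covc_cons, covc_cons, hcov' j]
      · -- f shorter : g = (f.2, e.2)
        set g : ℕ × ℕ := (f.2, e.2) with hg
        have hEcard : Multiset.card (g ::ₘ E₁) ≤ n := by
          simp only [Multiset.card_cons]; omega
        have hEvalid : ∀ p ∈ g ::ₘ E₁, p.1 < p.2 := by
          intro p hp
          rcases Multiset.mem_cons.mp hp with rfl | hp
          · exact hgt
          · exact hvalid₁ p hp
        have hEeven : ∀ w, Even (deg (g ::ₘ E₁) w) := by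
          intro w
          have h1 := heven w
          rw [hdegE w] at h1
          rw [deg_cons]
          rcases Nat.even_or_odd (deg E₁ w + ideg g w) with h | h
          · exact h
          · exfalso
            have h2 : deg E₁ w + ideg e w + ideg f w = deg E₁ w + ideg g w + (if e.1 = w then 2 else 0) := by
              simp only [ideg, hg, hf1]
              split_ifs <;> omega
            rw [h2] at h1
            split_ifs at h1 with hw
            · rw [Nat.even_add] at h1
              simp at h1
              exact (Nat.not_even_iff_odd.mpr h) h1
            · rw [Nat.add_zero] at h1
              exact (Nat.not_even_iff_odd.mpr h) h1
        obtain ⟨P', Q', hE', hcov'⟩ := ih (g ::ₘ E₁) hEcard hEvalid hEeven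
        have hsplit : ∀ j, icov e j = icov f j + icov g j := by
          intro j
          have := icov_split (a := e.1) (v := f.2) (b := e.2) (by omega) (by omega) j
          rw [hg]
          have hf' : (e.1, f.2) = f := by
            rw [← hf1]
          rw [hf'] at this
          simpa using this
        have hgmem : g ∈ P' + Q' := by rw [← hE']; simp
        rcases Multiset.mem_add.mp hgmem with hgP | hgQ
        · exact reconB hgP hE' hcov' hsplit
        · obtain ⟨P, Q, hPQ, hc⟩ := reconB hgQ (by rw [hE', add_comm]) (fun j => (hcov' j).symm) hsplit
          exact ⟨Q, P, by rw [hPQ, add_comm], fun j => (hc j).symm⟩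
    · -- concat : f.2 = e.1, g = (f.1, e.2)
      set g : ℕ × ℕ := (f.1, e.2) with hg
      have hEcard : Multiset.card (g ::ₘ E₁) ≤ n := by
        simp only [Multiset.card_cons]; omega
      have hEvalid : ∀ p ∈ g ::ₘ E₁, p.1 < p.2 := by
        intro p hp
        rcases Multiset.mem_cons.mp hp with rfl | hp
        · show f.1 < e.2
          omega
        · exact hvalid₁ p hp
      have hEeven : ∀ w, Even (deg (g ::ₘ E₁) w) := by
        intro w
        have h1 := heven w
        rw [hdegE w] at h1
        rw [deg_cons]
        rcases Nat.even_or_odd (deg E₁ w + ideg g w) with h | h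
        · exact h
        · exfalso
          have h2 : deg E₁ w + ideg e w + ideg f w = deg E₁ w + ideg g w + (if e.1 = w then 2 else 0) := by
            simp only [ideg, hg]
            split_ifs <;> omega
          rw [h2] at h1
          split_ifs at h1 with hw
          · rw [Nat.even_add] at h1
            simp at h1
            exact (Nat.not_even_iff_odd.mpr h) h1
          · rw [Nat.add_zero] at h1
            exact (Nat.not_even_iff_odd.mpr h) h1
      obtain ⟨P', Q', hE', hcov'⟩ := ih (g ::ₘ E₁) hEcard hEvalid hEeven
      have hsplit : ∀ j, icov g j = icov e j + icov f j := by
        intro j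
        have := icov_split (a := f.1) (v := f.2) (b := e.2) (by omega) (by omega) j
        rw [hg]
        have hf' : (f.1, f.2) = f := rfl
        have he' : (f.2, e.2) = e := by rw [hf2]
        rw [hf', he'] at this
        rw [this]; ring
      have hgmem : g ∈ P' + Q' := by rw [← hE']; simp
      rcases Multiset.mem_add.mp hgmem with hgP | hgQ
      · exact reconA hgP hE' hcov' hsplit
      · obtain ⟨P, Q, hPQ, hc⟩ := reconA hgQ (by rw [hE', add_comm]) (fun j => (hcov' j).symm) hsplit
        exact ⟨Q, P, by rw [hPQ, add_comm], fun j => (hc j).symm⟩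


lemma covc_eq_zero {M : Multiset (ℕ × ℕ)} {j : ℕ} (h : ∀ p ∈ M, ¬ covp p j) :
    covc M j = 0 := by
  simp only [covc, Multiset.card_eq_zero]
  rw [Multiset.filter_eq_nil]
  exact h

lemma deg_eq_zero {M : Multiset (ℕ × ℕ)} {v : ℕ} (h : ∀ p ∈ M, ¬ (p.1 = v ∨ p.2 = v)) :
    deg M v = 0 := by
  simp only [deg, Multiset.card_eq_zero]
  rw [Multiset.filter_eq_nil]
  exact h

/-- handshake lemma. -/
lemma sum_deg (N : ℕ) (E : Multiset (ℕ × ℕ)) (hbound : ∀ p ∈ E, p.1 < N ∧ p.2 < N)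
    (hvalid : ∀ p ∈ E, p.1 < p.2) :
    ∑ v ∈ Finset.range N, deg E v = 2 * Multiset.card E := by
  induction E using Multiset.induction with
  | empty => simp
  | cons p M ih =>
    have hpb := hbound p (by simp)
    have hpv := hvalid p (by simp)
    simp only [deg_cons]
    rw [Finset.sum_add_distrib, ih (fun q hq => hbound q (by simp [hq]))
      (fun q hq => hvalid q (by simp [hq]))]
    have h2 : ∑ v ∈ Finset.range N, ideg p v = 2 := by
      have h3 : ∑ v ∈ Finset.range N, ideg p v
          = ((Finset.range N).filter (fun v => p.1 = v ∨ p.2 = v)).card := by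
        rw [Finset.card_filter]
        exact Finset.sum_congr rfl (fun v _ => by simp [ideg])
      rw [h3]
      have h4 : (Finset.range N).filter (fun v => p.1 = v ∨ p.2 = v) = {p.1, p.2} := by
        ext v
        simp only [Finset.mem_filter, Finset.mem_range, Finset.mem_insert, Finset.mem_singleton]
        constructor
        · rintro ⟨_, h | h⟩
          · exact Or.inl h.symm
          · exact Or.inr h.symm
        · rintro (rfl | rfl)
          · exact ⟨hpb.1, Or.inl rfl⟩
          · exact ⟨hpb.2, Or.inr rfl⟩
      rw [h4]
      rw [Finset.card_insert_of_notMem (by simp; omega), Finset.card_singleton]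
    rw [Multiset.card_cons]
    omega

/-- parity: number of odd terms has same parity as the sum. -/
lemma card_odd_mod (F : Finset ℕ) (f : ℕ → ℕ) :
    (F.filter (fun v => ¬ Even (f v))).card % 2 = (∑ v ∈ F, f v) % 2 := by
  induction F using Finset.induction with
  | empty => simp
  | @insert a F ha ih =>
    rw [Finset.sum_insert ha, Finset.filter_insert]
    by_cases hfa : Even (f a)
    · rw [if_neg (by simp [hfa])]
      have hfa' : f a % 2 = 0 := Nat.even_iff.mp hfa
      omega
    · rw [if_pos (by simp [hfa])]
      rw [Finset.card_insert_of_notMem (by simp [ha])]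
      have hfa' : f a % 2 = 1 := Nat.odd_iff.mp (Nat.not_even_iff_odd.mp hfa)
      omega

lemma even_card_odd (F : Finset ℕ) (f : ℕ → ℕ) (h : Even (∑ v ∈ F, f v)) :
    Even ((F.filter (fun v => ¬ Even (f v))).card) := by
  have h1 := card_odd_mod F f
  have h2 : (∑ v ∈ F, f v) % 2 = 0 := Nat.even_iff.mp h
  exact Nat.even_iff.mpr (by omega)


noncomputable def pairUp : List ℕ → Multiset (ℕ × ℕ)
  | [] => 0
  | [_] => 0
  | a :: b :: l => (a, b) ::ₘ pairUp l

theorem pairUp_mem : ∀ (l : List ℕ) (p : ℕ × ℕ), p ∈ pairUp l → p.1 ∈ l ∧ p.2 ∈ l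
  | [], p, hp => by simp [pairUp] at hp
  | [a], p, hp => by simp [pairUp] at hp
  | a :: b :: l, p, hp => by
    rw [pairUp, Multiset.mem_cons] at hp
    rcases hp with rfl | hp
    · simp
    · have := pairUp_mem l p hp
      simp [this.1, this.2]

theorem pairUp_valid : ∀ (l : List ℕ), l.Pairwise (· < ·) →
    ∀ p ∈ pairUp l, p.1 < p.2
  | [], _, p, hp => by simp [pairUp] at hp
  | [a], _, p, hp => by simp [pairUp] at hp
  | a :: b :: l, hs, p, hp => by
    rw [pairUp, Multiset.mem_cons] at hp
    rcases hp with rfl | hp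
    · exact (List.pairwise_cons.mp hs).1 b (by simp)
    · exact pairUp_valid l ((List.pairwise_cons.mp (List.pairwise_cons.mp hs).2).2) p hp

theorem pairUp_covc : ∀ (l : List ℕ), l.Pairwise (· < ·) → ∀ j, covc (pairUp l) j ≤ 1
  | [], _, j => by simp [pairUp]
  | [a], _, j => by simp [pairUp]
  | a :: b :: l, hs, j => by
    rw [pairUp, covc_cons]
    have hb : ∀ x ∈ l, b < x := (List.pairwise_cons.mp (List.pairwise_cons.mp hs).2).1
    have hl : l.Pairwise (· < ·) := (List.pairwise_cons.mp (List.pairwise_cons.mp hs).2).2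
    by_cases hcov : covp (a, b) j
    · have h0 : covc (pairUp l) j = 0 := by
        apply covc_eq_zero
        intro p hp hcp
        have h1 := (pairUp_mem l p hp).1
        have h2 := hb p.1 h1
        rcases hcov with ⟨_, hjb⟩
        rcases hcp with ⟨hpj, _⟩
        omega
      simp [icov, hcov, h0]
    · have : icov (a, b) j = 0 := by simp [icov, hcov]
      rw [this]
      simpa using pairUp_covc l hl j

theorem pairUp_deg : ∀ (l : List ℕ), l.Pairwise (· < ·) → Even l.length →
    ∀ v, deg (pairUp l) v = if v ∈ l then 1 else 0
  | [], _, _, v => by simp [pairUp]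
  | [a], _, hlen, v => by simp at hlen
  | a :: b :: l, hs, hlen, v => by
    have hab : a < b := (List.pairwise_cons.mp hs).1 b (by simp)
    have hal : ∀ x ∈ l, a < x := fun x hx => (List.pairwise_cons.mp hs).1 x (by simp [hx])
    have hbl : ∀ x ∈ l, b < x := (List.pairwise_cons.mp (List.pairwise_cons.mp hs).2).1
    have hl : l.Pairwise (· < ·) := (List.pairwise_cons.mp (List.pairwise_cons.mp hs).2).2
    have hlen' : Even l.length := by
      simp only [List.length_cons] at hlen
      rcases Nat.even_or_odd l.length with h | h
      · exact h
      · exfalso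
        rw [Nat.even_add_one, Nat.even_add_one] at hlen
        simp [Nat.not_even_iff_odd.mpr h] at hlen
    rw [pairUp, deg_cons, pairUp_deg l hl hlen' v]
    by_cases hva : v = a
    · subst hva
      have : v ∉ l := fun h => absurd (hal v h) (lt_irrefl v)
      simp [ideg, this]
    · by_cases hvb : v = b
      · subst hvb
        have : v ∉ l := fun h => absurd (hbl v h) (lt_irrefl v)
        simp [ideg, this, hva]
      · have : ¬((a, b).1 = v ∨ (a, b).2 = v) := by
          simp only [not_or]
          exact ⟨fun h => hva h.symm, fun h => hvb h.symm⟩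
        simp only [ideg, if_neg this, Nat.add_zero, List.mem_cons]
        have hne : ¬(v = a ∨ v = b) := by tauto
        by_cases hvl : v ∈ l
        · simp [hvl]
        · simp [hvl, hva, hvb]


section U1
variable {ι : Type*} (s t : ι → ℕ)

lemma covc_map (S : Finset ι) (j : ℕ) :
    covc (S.val.map (fun i => (s i, t i))) j
      = (S.filter (fun i => s i ≤ j ∧ j < t i)).card := by
  rw [covc, Multiset.filter_map, Multiset.card_map, Finset.card_def, Finset.filter_val]
  exact congrArg _ (Multiset.filter_congr (fun x _ => Iff.rfl))

/-- selection of a subset realizing a sub-multiset of interval values. -/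
theorem sel : ∀ (M : Multiset (ℕ × ℕ)) (Y : Finset ι),
    M ≤ Y.val.map (fun i => (s i, t i)) →
    ∃ A : Finset ι, A ⊆ Y ∧ A.val.map (fun i => (s i, t i)) = M := by
  intro M
  induction M using Multiset.induction with
  | empty => exact fun Y _ => ⟨∅, Finset.empty_subset Y, by simp⟩
  | cons p M ih =>
    intro Y hle
    have hp : p ∈ Y.val.map (fun i => (s i, t i)) := Multiset.mem_of_le hle (by simp)
    obtain ⟨i, hiY, hip⟩ := Multiset.mem_map.mp hp
    have hiY' : i ∈ Y := hiY
    have hYval : Y.val = i ::ₘ (Y.erase i).val := by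
      rw [Finset.erase_val]
      exact (Multiset.cons_erase (Finset.mem_val.mpr hiY')).symm
    have hmap : Y.val.map (fun i => (s i, t i))
        = p ::ₘ (Y.erase i).val.map (fun i => (s i, t i)) := by
      rw [hYval, Multiset.map_cons, hip]
    rw [hmap] at hle
    have hle' : M ≤ (Y.erase i).val.map (fun i => (s i, t i)) :=
      (Multiset.cons_le_cons_iff p).mp hle
    obtain ⟨A', hA'sub, hA'map⟩ := ih (Y.erase i) hle'
    have hiA' : i ∉ A' := fun h => (Finset.mem_erase.mp (hA'sub h)).1 rfl
    refine ⟨insert i A', ?_, ?_⟩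
    · exact Finset.insert_subset hiY' (hA'sub.trans (Finset.erase_subset i Y))
    · rw [Finset.insert_val_of_notMem hiA', Multiset.map_cons, hip, hA'map]

/-- balanced bipartition of an interval family. -/
theorem U1 (hst : ∀ i, s i < t i) (Y : Finset ι) :
    ∃ A : Finset ι, A ⊆ Y ∧ ∀ j : ℕ,
      (A.filter (fun i => s i ≤ j ∧ j < t i)).card
        ≤ ((Y \ A).filter (fun i => s i ≤ j ∧ j < t i)).card + 1 ∧
      ((Y \ A).filter (fun i => s i ≤ j ∧ j < t i)).card
        ≤ (A.filter (fun i => s i ≤ j ∧ j < t i)).card + 1 := by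
  classical
  set pf : ι → ℕ × ℕ := fun i => (s i, t i) with hpf
  set EY : Multiset (ℕ × ℕ) := Y.val.map pf with hEY
  set N : ℕ := (Y.sup t) + 1 with hN
  have hbound : ∀ p ∈ EY, p.1 < N ∧ p.2 < N := by
    intro p hp
    obtain ⟨i, hi, rfl⟩ := Multiset.mem_map.mp hp
    have h1 : t i ≤ Y.sup t := Finset.le_sup (Finset.mem_val.mp hi)
    have h2 := hst i
    constructor <;> simp [pf] <;> omega
  have hvalidE : ∀ p ∈ EY, p.1 < p.2 := by
    intro p hp
    obtain ⟨i, hi, rfl⟩ := Multiset.mem_map.mp hp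
    exact hst i
  -- odd-degree vertices
  set O : Finset ℕ := (Finset.range N).filter (fun v => ¬ Even (deg EY v)) with hO
  have hOeven : Even O.card :=
    even_card_odd _ _ (by rw [sum_deg N EY hbound hvalidE]; exact even_two_mul _)
  set l : List ℕ := O.sort (· ≤ ·) with hl
  have hlsort : l.Pairwise (· < ·) := (Finset.sortedLT_sort O).pairwise
  have hllen : Even l.length := by rwa [hl, Finset.length_sort]
  have hlmem : ∀ v, v ∈ l ↔ v ∈ O := fun v => Finset.mem_sort (· ≤ ·)
  set F : Multiset (ℕ × ℕ) := pairUp l with hF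
  -- the total multiset has even degrees everywhere
  have hvalid : ∀ p ∈ EY + F, p.1 < p.2 := by
    intro p hp
    rcases Multiset.mem_add.mp hp with h | h
    · exact hvalidE p h
    · exact pairUp_valid l hlsort p h
  have heven : ∀ v, Even (deg (EY + F) v) := by
    intro v
    rw [deg_add]
    have hdF : deg F v = if v ∈ l then 1 else 0 := pairUp_deg l hlsort hllen v
    by_cases hvl : v ∈ l
    · have hodd : ¬ Even (deg EY v) := ((Finset.mem_filter.mp ((hlmem v).mp hvl)).2)
      rw [hdF, if_pos hvl]
      exact Nat.even_add_one.mpr hodd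
    · rw [hdF, if_neg hvl, Nat.add_zero]
      by_cases hvN : v < N
      · by_contra hcon
        exact hvl ((hlmem v).mpr (Finset.mem_filter.mpr ⟨Finset.mem_range.mpr hvN, hcon⟩))
      · have : deg EY v = 0 := by
          apply deg_eq_zero
          intro p hp
          have := hbound p hp
          omega
        rw [this]; exact Even.zero
  obtain ⟨P, Q, hPQ, hcov⟩ := zeroSum (Multiset.card (EY + F)) (EY + F) le_rfl hvalid heven
  -- split the fillers between the two sides
  set F₁ : Multiset (ℕ × ℕ) := F ∩ P with hF₁
  set F₂ : Multiset (ℕ × ℕ) := F - F₁ with hF₂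
  have hF1P : F₁ ≤ P := Multiset.inter_le_right
  have hF1F : F₁ ≤ F := Multiset.inter_le_left
  have hF12 : F₁ + F₂ = F := by rw [hF₂, add_tsub_cancel_of_le hF1F]
  have hFle : F ≤ P + Q := by rw [← hPQ]; exact Multiset.le_add_left F EY
  have hF2Q : F₂ ≤ Q := by
    rw [Multiset.le_iff_count]
    intro a
    have h1 := Multiset.le_iff_count.mp hFle a
    rw [Multiset.count_add] at h1
    rw [hF₂, Multiset.count_sub, hF₁, Multiset.count_inter]
    omega
  set J₁ : Multiset (ℕ × ℕ) := P - F₁ with hJ₁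
  set J₂ : Multiset (ℕ × ℕ) := Q - F₂ with hJ₂
  have hPdec : P = J₁ + F₁ := by rw [hJ₁, tsub_add_cancel_of_le hF1P]
  have hQdec : Q = J₂ + F₂ := by rw [hJ₂, tsub_add_cancel_of_le hF2Q]
  have hJsum : J₁ + J₂ = EY := by
    have h1 : EY + F = (J₁ + J₂) + (F₁ + F₂) := by
      rw [hPQ, hPdec, hQdec, add_add_add_comm]
    rw [hF12] at h1
    exact (add_right_cancel h1.symm)
  -- select the subset A realizing J₁
  obtain ⟨A, hAY, hAmap⟩ := sel s t J₁ Y (by rw [← hEY, ← hJsum]; exact Multiset.le_add_right J₁ J₂)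
  have hBmap : (Y \ A).val.map pf = J₂ := by
    have h1 : A.val + (Y \ A).val = Y.val := by
      rw [Finset.sdiff_val, add_tsub_cancel_of_le (Finset.val_le_iff.mpr hAY)]
    have h2 : (A.val + (Y \ A).val).map pf = EY := by rw [h1]
    rw [Multiset.map_add, hAmap] at h2
    have h3 : J₁ + (Y \ A).val.map pf = J₁ + J₂ := by rw [h2, hJsum]
    exact add_left_cancel h3
  refine ⟨A, hAY, fun j => ?_⟩
  have hc1 : (A.filter (fun i => s i ≤ j ∧ j < t i)).card = covc J₁ j := by
    rw [← hAmap]; exact (covc_map s t A j).symm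
  have hc2 : ((Y \ A).filter (fun i => s i ≤ j ∧ j < t i)).card = covc J₂ j := by
    rw [← hBmap]; exact (covc_map s t (Y \ A) j).symm
  have hcF : covc F₁ j + covc F₂ j ≤ 1 := by
    rw [← covc_add, hF12]
    exact pairUp_covc l hlsort j
  have hcP : covc P j = covc J₁ j + covc F₁ j := by rw [hPdec, covc_add]
  have hcQ : covc Q j = covc J₂ j + covc F₂ j := by rw [hQdec, covc_add]
  have hbal := hcov j
  rw [hcP, hcQ] at hbal
  rw [hc1, hc2]
  omega

end U1

/-- integer square rebalancing inequality. -/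
lemma sqlemZ (a b x y : ℤ) (hsum : a + b = x + y) (h1 : a ≤ b + 1) (h2 : b ≤ a + 1) :
    a^2 + b^2 ≤ x^2 + y^2 ∧ (y + 2 ≤ x → a^2 + b^2 < x^2 + y^2) := by
  have key : x^2 + y^2 - (a^2 + b^2) = (x - a)*(x - b) + (y - a)*(y - b) := by
    have hb : b = x + y - a := by omega
    subst hb; ring
  have hx : 0 ≤ (x - a)*(x - b) := by
    rcases le_or_gt a x with h | h
    · rcases le_or_gt b x with h' | h'
      · exact mul_nonneg (by omega) (by omega)
      · have : x = a := by omega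
        simp [this]
    · have hbx : x ≤ b := by omega
      nlinarith [mul_nonneg (by omega : (0:ℤ) ≤ a - x) (by omega : (0:ℤ) ≤ b - x)]
  have hy : 0 ≤ (y - a)*(y - b) := by
    rcases le_or_gt a y with h | h
    · rcases le_or_gt b y with h' | h'
      · exact mul_nonneg (by omega) (by omega)
      · have : y = a := by omega
        simp [this]
    · have hby : y ≤ b := by omega
      nlinarith [mul_nonneg (by omega : (0:ℤ) ≤ a - y) (by omega : (0:ℤ) ≤ b - y)]
  constructor
  · nlinarith [key, hx, hy]
  · intro hxy
    have hax : a < x := by omega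
    have hbx : b < x := by omega
    have h3 : 1 ≤ (x - a)*(x - b) := by
      have : (1:ℤ) ≤ x - a := by omega
      have : (1:ℤ) ≤ x - b := by omega
      nlinarith
    nlinarith [key, h3, hy]

lemma sqlemN (a b x y : ℕ) (hsum : a + b = x + y) (h1 : a ≤ b + 1) (h2 : b ≤ a + 1) :
    a^2 + b^2 ≤ x^2 + y^2 ∧ (y + 2 ≤ x → a^2 + b^2 < x^2 + y^2) := by
  have := sqlemZ a b x y (by exact_mod_cast congrArg (Nat.cast : ℕ → ℤ) hsum)
    (by exact_mod_cast h1) (by exact_mod_cast h2)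
  constructor
  · exact_mod_cast this.1
  · intro h; exact_mod_cast this.2 (by exact_mod_cast h)

section Uq
variable {ι : Type*} [Fintype ι] (s t : ι → ℕ)

noncomputable def cnt (X : Finset ι) {q : ℕ} (g : ι → Fin q) (ρ : Fin q) (j : ℕ) : ℕ :=
  (X.filter (fun i => g i = ρ ∧ s i ≤ j ∧ j < t i)).card

noncomputable def used (X : Finset ι) (j : ℕ) : ℕ :=
  (X.filter (fun i => s i ≤ j ∧ j < t i)).card

noncomputable def pot (X : Finset ι) (T : ℕ) {q : ℕ} (g : ι → Fin q) : ℕ :=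
  ∑ j ∈ Finset.range T, ∑ ρ : Fin q, (cnt s t X g ρ j)^2

lemma cnt_sum (X : Finset ι) {q : ℕ} (g : ι → Fin q) (j : ℕ) :
    ∑ ρ : Fin q, cnt s t X g ρ j = used s t X j := by
  rw [used, Finset.card_eq_sum_card_fiberwise (f := g) (t := Finset.univ)
    (fun x _ => Finset.mem_univ (g x))]
  apply Finset.sum_congr rfl
  intro ρ _
  rw [cnt, Finset.filter_filter]
  apply congrArg Finset.card
  ext i
  simp only [Finset.mem_filter]
  tauto


lemma rebalance (hst : ∀ i, s i < t i) (X : Finset ι) {q : ℕ} (g : ι → Fin q)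
    (T : ℕ) (hT : ∀ i : ι, t i < T) (jb : ℕ) (ρa ρb : Fin q)
    (hbad : cnt s t X g ρb jb + 2 ≤ cnt s t X g ρa jb) :
    ∃ g' : ι → Fin q, pot s t X T g' < pot s t X T g := by
  classical
  have hab : ρa ≠ ρb := by rintro rfl; omega
  set Y : Finset ι := X.filter (fun i => g i = ρa ∨ g i = ρb) with hY
  obtain ⟨A, hAY, hbal⟩ := U1 s t hst Y
  refine ⟨fun i => if i ∈ A then ρa else if i ∈ Y then ρb else g i, ?_⟩
  set g' : ι → Fin q := fun i => if i ∈ A then ρa else if i ∈ Y then ρb else g i with hg'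
  -- basic membership facts
  have hmemY : ∀ i, i ∈ Y ↔ i ∈ X ∧ (g i = ρa ∨ g i = ρb) := by
    intro i; rw [hY, Finset.mem_filter]
  -- counting identities
  have fa : ∀ j, cnt s t X g' ρa j = (A.filter (fun i => s i ≤ j ∧ j < t i)).card := by
    intro j
    apply congrArg Finset.card
    ext i
    simp only [Finset.mem_filter]
    constructor
    · rintro ⟨hiX, hgi, hcov⟩
      by_cases hiA : i ∈ A
      · exact ⟨hiA, hcov⟩
      · exfalso
        by_cases hiYm : i ∈ Y
        · rw [hg'] at hgi; simp only [if_neg hiA, if_pos hiYm] at hgi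
          exact hab hgi.symm
        · rw [hg'] at hgi; simp only [if_neg hiA, if_neg hiYm] at hgi
          exact hiYm ((hmemY i).mpr ⟨hiX, Or.inl hgi⟩)
    · rintro ⟨hiA, hcov⟩
      have hiYm : i ∈ Y := hAY hiA
      refine ⟨(Finset.mem_filter.mp hiYm).1, ?_, hcov⟩
      rw [hg']; simp only [if_pos hiA]
  have fb : ∀ j, cnt s t X g' ρb j = ((Y \ A).filter (fun i => s i ≤ j ∧ j < t i)).card := by
    intro j
    apply congrArg Finset.card
    ext i
    simp only [Finset.mem_filter, Finset.mem_sdiff]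
    constructor
    · rintro ⟨hiX, hgi, hcov⟩
      by_cases hiA : i ∈ A
      · exfalso
        rw [hg'] at hgi; simp only [if_pos hiA] at hgi
        exact hab hgi
      · by_cases hiYm : i ∈ Y
        · exact ⟨⟨hiYm, hiA⟩, hcov⟩
        · exfalso
          rw [hg'] at hgi; simp only [if_neg hiA, if_neg hiYm] at hgi
          exact hiYm ((hmemY i).mpr ⟨hiX, Or.inr hgi⟩)
    · rintro ⟨⟨hiYm, hiA⟩, hcov⟩
      refine ⟨(Finset.mem_filter.mp hiYm).1, ?_, hcov⟩
      rw [hg']; simp only [if_neg hiA, if_pos hiYm]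
  have fc : ∀ (ρ : Fin q), ρ ≠ ρa → ρ ≠ ρb → ∀ j, cnt s t X g' ρ j = cnt s t X g ρ j := by
    intro ρ hρa hρb j
    apply congrArg Finset.card
    ext i
    simp only [Finset.mem_filter]
    have h1 : i ∈ X → (g' i = ρ ↔ g i = ρ) := by
      intro hiX
      by_cases hiA : i ∈ A
      · rw [hg']; simp only [if_pos hiA]
        have : g i = ρa ∨ g i = ρb := ((hmemY i).mp (hAY hiA)).2
        constructor
        · intro h; exact absurd h.symm hρa
        · intro h; rcases this with h' | h' <;> rw [h] at h'
          · exact absurd h' hρa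
          · exact absurd h' hρb
      · by_cases hiYm : i ∈ Y
        · rw [hg']; simp only [if_neg hiA, if_pos hiYm]
          have : g i = ρa ∨ g i = ρb := ((hmemY i).mp hiYm).2
          constructor
          · intro h; exact absurd h.symm hρb
          · intro h; rcases this with h' | h' <;> rw [h] at h'
            · exact absurd h' hρa
            · exact absurd h' hρb
        · rw [hg']; simp only [if_neg hiA, if_neg hiYm]
    constructor
    · rintro ⟨hiX, hgi, hcov⟩; exact ⟨hiX, (h1 hiX).mp hgi, hcov⟩
    · rintro ⟨hiX, hgi, hcov⟩; exact ⟨hiX, (h1 hiX).mpr hgi, hcov⟩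
  have fd : ∀ j, cnt s t X g ρa j + cnt s t X g ρb j
      = (Y.filter (fun i => s i ≤ j ∧ j < t i)).card := by
    intro j
    rw [cnt, cnt, ← Finset.card_union_of_disjoint]
    · apply congrArg Finset.card
      ext i
      simp only [Finset.mem_union, Finset.mem_filter, hmemY]
      tauto
    · rw [Finset.disjoint_left]
      rintro i hi1 hi2
      have h1 := (Finset.mem_filter.mp hi1).2.1
      have h2 := (Finset.mem_filter.mp hi2).2.1
      exact hab (h1 ▸ h2 ▸ rfl)
  have fe : ∀ j, (A.filter (fun i => s i ≤ j ∧ j < t i)).card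
      + ((Y \ A).filter (fun i => s i ≤ j ∧ j < t i)).card
      = (Y.filter (fun i => s i ≤ j ∧ j < t i)).card := by
    intro j
    rw [← Finset.card_union_of_disjoint]
    · apply congrArg Finset.card
      rw [← Finset.filter_union, Finset.union_sdiff_of_subset hAY]
    · exact Finset.disjoint_filter_filter (Finset.disjoint_sdiff)
  -- now compare the potentials
  have hjbT : jb ∈ Finset.range T := by
    have h2 : 0 < cnt s t X g ρa jb := by omega
    rw [cnt, Finset.card_pos] at h2
    obtain ⟨i, hi⟩ := h2
    have := (Finset.mem_filter.mp hi).2.2.2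
    have := hT i
    simp only [Finset.mem_range]
    omega
  have hbmem : ρb ∈ Finset.univ.erase ρa := Finset.mem_erase.mpr ⟨(Ne.symm hab), Finset.mem_univ _⟩
  have expand : ∀ (h : ι → Fin q) (j : ℕ), ∑ ρ : Fin q, (cnt s t X h ρ j)^2
      = (cnt s t X h ρa j)^2 + ((cnt s t X h ρb j)^2
        + ∑ ρ ∈ (Finset.univ.erase ρa).erase ρb, (cnt s t X h ρ j)^2) := by
    intro h j
    rw [← Finset.add_sum_erase _ (fun ρ => (cnt s t X h ρ j)^2) (Finset.mem_univ ρa),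
        ← Finset.add_sum_erase _ (fun ρ => (cnt s t X h ρ j)^2) hbmem]
  have hrest : ∀ j, ∑ ρ ∈ (Finset.univ.erase ρa).erase ρb, (cnt s t X g' ρ j)^2
      = ∑ ρ ∈ (Finset.univ.erase ρa).erase ρb, (cnt s t X g ρ j)^2 := by
    intro j
    apply Finset.sum_congr rfl
    intro ρ hρ
    have h1 := (Finset.mem_erase.mp hρ).1
    have h2 := (Finset.mem_erase.mp (Finset.mem_erase.mp hρ).2).1
    rw [fc ρ h2 h1 j]
  have hkey : ∀ j, (cnt s t X g' ρa j)^2 + (cnt s t X g' ρb j)^2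
      ≤ (cnt s t X g ρa j)^2 + (cnt s t X g ρb j)^2 :=
    fun j => (sqlemN _ _ _ _ (by rw [fa, fb, fd, fe]) (by rw [fa, fb]; exact (hbal j).1)
      (by rw [fa, fb]; exact (hbal j).2)).1
  have hinner : ∀ j, ∑ ρ : Fin q, (cnt s t X g' ρ j)^2 ≤ ∑ ρ : Fin q, (cnt s t X g ρ j)^2 := by
    intro j
    rw [expand g', expand g, hrest j]
    have := hkey j
    omega
  have hstrict : ∑ ρ : Fin q, (cnt s t X g' ρ jb)^2 < ∑ ρ : Fin q, (cnt s t X g ρ jb)^2 := by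
    rw [expand g', expand g, hrest jb]
    have := (sqlemN (cnt s t X g' ρa jb) (cnt s t X g' ρb jb)
        (cnt s t X g ρa jb) (cnt s t X g ρb jb)
        (by rw [fa, fb, fd, fe]) (by rw [fa, fb]; exact (hbal jb).1)
        (by rw [fa, fb]; exact (hbal jb).2)).2 (by omega)
    omega
  exact Finset.sum_lt_sum (fun j _ => hinner j) ⟨jb, hjbT, hstrict⟩

theorem Uq (hst : ∀ i, s i < t i) (X : Finset ι) (q : ℕ) (hq : 0 < q) :
    ∃ g : ι → Fin q, ∀ (ρ : Fin q) (j : ℕ),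
      q * cnt s t X g ρ j ≤ used s t X j + (q - 1) := by
  classical
  set T : ℕ := (Finset.univ.sup t) + 1 with hTdef
  have hT : ∀ i : ι, t i < T := by
    intro i
    have : t i ≤ Finset.univ.sup t := Finset.le_sup (Finset.mem_univ i)
    omega
  have main : ∀ (n : ℕ) (g : ι → Fin q), pot s t X T g ≤ n →
      ∃ g' : ι → Fin q, ∀ (j : ℕ) (ρ1 ρ2 : Fin q),
        cnt s t X g' ρ1 j ≤ cnt s t X g' ρ2 j + 1 := by
    intro n
    induction n with
    | zero =>
      intro g hg
      by_cases hgood : ∀ (j : ℕ) (ρ1 ρ2 : Fin q), cnt s t X g ρ1 j ≤ cnt s t X g ρ2 j + 1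
      · exact ⟨g, hgood⟩
      · push_neg at hgood
        obtain ⟨j, ρ1, ρ2, hbad⟩ := hgood
        obtain ⟨g', hg'⟩ := rebalance s t hst X g T hT j ρ1 ρ2 (by omega)
        omega
    | succ n ih =>
      intro g hg
      by_cases hgood : ∀ (j : ℕ) (ρ1 ρ2 : Fin q), cnt s t X g ρ1 j ≤ cnt s t X g ρ2 j + 1
      · exact ⟨g, hgood⟩
      · push_neg at hgood
        obtain ⟨j, ρ1, ρ2, hbad⟩ := hgood
        obtain ⟨g', hg'⟩ := rebalance s t hst X g T hT j ρ1 ρ2 (by omega)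
        exact ih g' (by omega)
  obtain ⟨g, hgood⟩ := main (pot s t X T (fun _ => ⟨0, hq⟩)) (fun _ => ⟨0, hq⟩) le_rfl
  refine ⟨g, fun ρ j => ?_⟩
  obtain ⟨q', rfl⟩ : ∃ q', q = q' + 1 := ⟨q - 1, by omega⟩
  have hsum : ∑ ρ' : Fin (q' + 1), cnt s t X g ρ' j = used s t X j := cnt_sum s t X g j
  have h2 : ∑ _ρ' ∈ Finset.univ.erase ρ, cnt s t X g ρ j
      ≤ ∑ ρ' ∈ Finset.univ.erase ρ, (cnt s t X g ρ' j + 1) :=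
    Finset.sum_le_sum (fun ρ' _ => hgood j ρ ρ')
  simp only [Finset.sum_add_distrib, Finset.sum_const,
    Finset.card_erase_of_mem (Finset.mem_univ ρ), Finset.card_univ, Fintype.card_fin,
    smul_eq_mul, mul_one, Nat.add_sub_cancel] at h2
  have h3 : cnt s t X g ρ j + ∑ ρ' ∈ Finset.univ.erase ρ, cnt s t X g ρ' j
      = used s t X j := by
    rw [Finset.add_sum_erase _ (fun ρ' => cnt s t X g ρ' j) (Finset.mem_univ ρ), hsum]
  have hgoal : (q' + 1) * cnt s t X g ρ j ≤ used s t X j + q' := by nlinarith [h2, h3]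
  simpa using hgoal

end Uq

/-- division counting helper. -/
lemma divlem (x y z w : ℕ) (hw : 1 ≤ w) (h1 : w * x ≤ y + (w - 1)) (h2 : y < w * z) :
    x ≤ z := by
  by_contra hx
  push_neg at hx
  have h3 : w * z + w ≤ w * x := by
    rw [← Nat.mul_succ]
    exact Nat.mul_le_mul_left w hx
  set a := w * x with ha
  set b := w * z with hb
  omega

/-- geometric bound : sum of 2^{-e} over distinct naturals ≥ 2 is at most 1/2. -/
lemma geo (F : Finset ℕ) (hF : ∀ e ∈ F, 2 ≤ e) : ∑ e ∈ F, ((1:ℝ)/2)^e ≤ 1/2 := by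
  classical
  rcases F.eq_empty_or_nonempty with rfl | ⟨e₀, he₀⟩
  · simp
  set N : ℕ := F.sup id with hN
  have hN2 : 2 ≤ N := le_trans (hF e₀ he₀) (Finset.le_sup (f := id) he₀)
  have hsub : F ⊆ Finset.Ico 2 (N+1) := by
    intro e he
    simp only [Finset.mem_Ico]
    exact ⟨hF e he, Nat.lt_succ_of_le (Finset.le_sup (f := id) he)⟩
  have h1 : ∑ e ∈ F, ((1:ℝ)/2)^e ≤ ∑ e ∈ Finset.Ico 2 (N+1), ((1:ℝ)/2)^e :=
    Finset.sum_le_sum_of_subset_of_nonneg hsub (fun e _ _ => by positivity)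
  have h2 : ∑ e ∈ Finset.Ico 2 (N+1), ((1:ℝ)/2)^e
      = ∑ e ∈ Finset.range (N+1), ((1:ℝ)/2)^e - ∑ e ∈ Finset.range 2, ((1:ℝ)/2)^e := by
    rw [Finset.sum_Ico_eq_sub _ (by omega : 2 ≤ N+1)]
  have h3 : ∑ e ∈ Finset.range (N+1), ((1:ℝ)/2)^e ≤ 2 := by
    have := geom_sum_eq (x := (1:ℝ)/2) (by norm_num) (N+1)
    rw [this]
    have hp : (0:ℝ) < ((1:ℝ)/2)^(N+1) := by positivity
    rw [div_le_iff_of_neg (by norm_num)]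
    nlinarith
  have h4 : ∑ e ∈ Finset.range 2, ((1:ℝ)/2)^e = 3/2 := by
    rw [Finset.sum_range_succ, Finset.sum_range_one]
    norm_num
  rw [h2, h4] at h1
  linarith

end RoundUFPProof

open RoundUFPProof

set_option maxHeartbeats 4000000 in
open PathUFP in
/-- Suppose every job `j ∈ J` satisfies the no-bottleneck assumption
`d_j ≤ c_min`. Then `J` can be partitioned into at most `12r` feasible rounds, where `r`
is the congestion of the instance; in particular, since every Round-UFP packing uses at
least `r` rounds, there is a packing using at most 12 times the optimal number of
rounds. -/
theorem packing_under_nba {ι : Type*} [Fintype ι] {m : ℕ} (hm : 0 < m)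
    (c : Fin m → ℝ) (hc : ∀ k, 0 < c k)
    (s t : ι → ℕ) (d : ι → ℝ)
    (hst : ∀ i, s i < t i) (htm : ∀ i, t i ≤ m) (hd : ∀ i, 0 < d i)
    (hnba : ∀ i, d i ≤ cmin hm c) :
    ∃ (K : ℕ) (f : ι → Fin K),
      (K : ℤ) ≤ 12 * congestion s t d hm c ∧ IsPacking s t d c f ∧
      ∀ (K' : ℕ) (f' : ι → Fin K'), IsPacking s t d c f' → K ≤ 12 * K' := by
  classical
  by_cases hι : Nonempty ι
  swap
  · -- empty instance
    haveI : IsEmpty ι := not_nonempty_iff.mp hι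
    have hcong : 0 ≤ congestion s t d hm c := by
      have h1 : ⌈load s t d ⟨0, hm⟩ / c ⟨0, hm⟩⌉ = 0 := by
        rw [load, Finset.univ_eq_empty, Finset.sum_empty, zero_div, Int.ceil_zero]
      rw [congestion]
      exact le_trans (le_of_eq h1.symm)
        (Finset.le_sup' (fun k : Fin m => ⌈load s t d k / c k⌉) (Finset.mem_univ _))
    refine ⟨0, fun i => isEmptyElim i, by omega, ?_, ?_⟩
    · intro ρ k
      exact ρ.elim0
    · intro K' f' _
      exact Nat.zero_le _
  · obtain ⟨i₀⟩ := hι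
    set r : ℤ := congestion s t d hm c with hrdef
    have hrk : ∀ k : Fin m, ⌈load s t d k / c k⌉ ≤ r := by
      intro k
      rw [hrdef, congestion]
      exact Finset.le_sup' (fun k : Fin m => ⌈load s t d k / c k⌉) (Finset.mem_univ k)
    have hload_nonneg : ∀ k : Fin m, 0 ≤ load s t d k := by
      intro k
      rw [load]
      apply Finset.sum_nonneg
      intro i _
      split_ifs
      · exact le_of_lt (hd i)
      · exact le_rfl
    have hload_le : ∀ k : Fin m, load s t d k ≤ (r : ℝ) * c k := by
      intro k
      have h1 : load s t d k / c k ≤ (r : ℝ) :=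
        le_trans (Int.le_ceil _) (by exact_mod_cast hrk k)
      calc load s t d k = load s t d k / c k * c k :=
            (div_mul_cancel₀ _ (ne_of_gt (hc k))).symm
        _ ≤ (r:ℝ) * c k := mul_le_mul_of_nonneg_right h1 (le_of_lt (hc k))
    have hr1 : 1 ≤ r := by
      have hk₀ : (s i₀) < m := lt_of_lt_of_le (hst i₀) (htm i₀)
      set k₀ : Fin m := ⟨s i₀, hk₀⟩ with hk₀def
      have huse : uses s t i₀ k₀ := ⟨le_refl _, hst i₀⟩
      have hpos : 0 < load s t d k₀ := by
        rw [load]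
        apply Finset.sum_pos'
        · intro i _
          split_ifs
          · exact le_of_lt (hd i)
          · exact le_rfl
        · exact ⟨i₀, Finset.mem_univ _, by rw [if_pos huse]; exact hd i₀⟩
      have h1 : (1:ℤ) ≤ ⌈load s t d k₀ / c k₀⌉ :=
        Int.ceil_pos.mpr (div_pos hpos (hc k₀))
      exact le_trans h1 (hrk k₀)
    set R : ℕ := r.toNat with hRdef
    have hRr : (R : ℤ) = r := Int.toNat_of_nonneg (by omega)
    have hR1 : 1 ≤ R := by omega
    have hloadR : ∀ k : Fin m, load s t d k ≤ (R : ℝ) * c k := by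
      intro k
      have : ((R:ℕ) : ℝ) = ((r:ℤ) : ℝ) := by exact_mod_cast congrArg (Int.cast : ℤ → ℝ) hRr
      rw [this]
      exact hload_le k
    set cm : ℝ := cmin hm c with hcmdef
    have hcm_le : ∀ k : Fin m, cm ≤ c k := fun k => Finset.inf'_le _ (Finset.mem_univ k)
    have hcm_pos : 0 < cm := by
      obtain ⟨k', _, hk'⟩ := Finset.exists_mem_eq_inf' (⟨⟨0, hm⟩, Finset.mem_univ _⟩ :
        (Finset.univ : Finset (Fin m)).Nonempty) c
      rw [hcmdef, cmin, hk']
      exact hc k'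
    -- classes
    set SmallP : ι → Prop := fun i => d i ≤ cm / 4 with hSmallP
    set MedP : ι → Prop := fun i => d i ≤ cm / 2 with hMedP
    set Ei : ι → ℕ := fun i => Nat.log 2 ⌊cm / d i⌋₊ with hEidef
    -- facts about Ei on small jobs
    have hEfacts : ∀ i, SmallP i →
        2 ≤ Ei i ∧ d i ≤ cm / 2 ^ (Ei i) ∧ cm / 2 ^ (Ei i) < 2 * d i := by
      intro i hsm
      have hdi := hd i
      have h4 : (4:ℝ) ≤ cm / d i := by
        rw [le_div_iff₀ hdi]
        rw [hSmallP] at hsm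
        linarith
      have hfl4 : 4 ≤ ⌊cm / d i⌋₊ := Nat.le_floor (by exact_mod_cast h4)
      have hflne : ⌊cm / d i⌋₊ ≠ 0 := by omega
      have hflle : (⌊cm / d i⌋₊ : ℝ) ≤ cm / d i := Nat.floor_le (by positivity)
      refine ⟨?_, ?_, ?_⟩
      · have h5 : (2:ℕ)^2 ≤ ⌊cm / d i⌋₊ := by norm_num; omega
        have := (Nat.le_log_iff_pow_le (b := 2) (by norm_num) hflne).mpr h5
        simpa [hEidef] using this
      · have h1 : (2:ℕ) ^ (Ei i) ≤ ⌊cm / d i⌋₊ := Nat.pow_log_le_self 2 hflne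
        have h2 : ((2:ℝ)) ^ (Ei i) ≤ cm / d i := by
          calc ((2:ℝ))^(Ei i) = (((2:ℕ)^(Ei i) : ℕ) : ℝ) := by push_cast; ring
            _ ≤ (⌊cm / d i⌋₊ : ℝ) := by exact_mod_cast h1
            _ ≤ cm / d i := hflle
        have h3 : (2:ℝ)^(Ei i) * d i ≤ cm := by
          rw [← le_div_iff₀ hdi]
          exact h2
        rw [le_div_iff₀ (by positivity : (0:ℝ) < 2 ^ Ei i)]
        linarith [h3]
      · have h1 : ⌊cm / d i⌋₊ < 2 ^ (Ei i + 1) :=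
          Nat.lt_pow_succ_log_self (by norm_num) _
        have h2 : cm / d i < ((2:ℝ)) ^ (Ei i + 1) := by
          calc cm / d i < (⌊cm / d i⌋₊ : ℝ) + 1 := Nat.lt_floor_add_one _
            _ ≤ ((2:ℝ)) ^ (Ei i + 1) := by
                have : (⌊cm / d i⌋₊ : ℕ) + 1 ≤ 2 ^ (Ei i + 1) := by omega
                exact_mod_cast this
        have h3 : cm < ((2:ℝ)) ^ (Ei i + 1) * d i := by
          rw [← div_lt_iff₀ hdi]
          exact h2
        rw [div_lt_iff₀ (by positivity : (0:ℝ) < 2 ^ Ei i)]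
        have h5 : ((2:ℝ))^(Ei i + 1) = 2 * 2^(Ei i) := by ring
        nlinarith [h3]
    -- group families and their colourings
    set Xe : ℕ → Finset ι := fun e => Finset.univ.filter (fun i => SmallP i ∧ Ei i = e) with hXe
    have hGex : ∀ e : ℕ, ∃ g : ι → Fin (4*R), ∀ (ρ : Fin (4*R)) (j : ℕ),
        (4*R) * cnt s t (Xe e) g ρ j ≤ used s t (Xe e) j + (4*R - 1) :=
      fun e => Uq s t hst (Xe e) (4*R) (by omega)
    choose G hG using hGex
    set gs : ι → Fin (4*R) := fun i => G (Ei i) i with hgs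
    set X1 : Finset ι := Finset.univ.filter (fun i => ¬ MedP i) with hX1
    obtain ⟨g1, hg1⟩ := Uq s t hst X1 (4*R) (by omega)
    set X2 : Finset ι := Finset.univ.filter (fun i => ¬ SmallP i ∧ MedP i) with hX2
    obtain ⟨g2, hg2⟩ := Uq s t hst X2 (3*R) (by omega)
    -- the global assignment
    set K : ℕ := 11 * R with hK
    set f : ι → Fin K := fun i =>
      if SmallP i then ⟨(gs i).val, by have := (gs i).2; omega⟩
      else if MedP i then ⟨4*R + (g2 i).val, by have := (g2 i).2; omega⟩
      else ⟨7*R + (g1 i).val, by have := (g1 i).2; omega⟩ with hf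
    -- class bounds
    have hRpos : (0:ℝ) < ((4*R : ℕ) : ℝ) := by
      have : (0:ℕ) < 4*R := by omega
      exact_mod_cast this
    have hsmall_bound : ∀ (ρ₁ : Fin (4*R)) (k : Fin m),
        ∑ i ∈ Finset.univ.filter (fun i => SmallP i ∧ gs i = ρ₁ ∧
          s i ≤ (k:ℕ) ∧ (k:ℕ) < t i), d i ≤ c k := by
      intro ρ₁ k
      set W := Finset.univ.filter (fun i => SmallP i ∧ gs i = ρ₁ ∧
          s i ≤ (k:ℕ) ∧ (k:ℕ) < t i) with hWdef
      set V := Finset.univ.filter (fun i => SmallP i ∧ s i ≤ (k:ℕ) ∧ (k:ℕ) < t i) with hVdef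
      have hWV : W ⊆ V := by
        intro i hi
        rw [hWdef, Finset.mem_filter] at hi
        rw [hVdef, Finset.mem_filter]
        exact ⟨hi.1, hi.2.1, hi.2.2.2⟩
      have hES2 : ∀ e ∈ W.image Ei, 2 ≤ e := by
        intro e he
        obtain ⟨i, hi, rfl⟩ := Finset.mem_image.mp he
        have hsm : SmallP i := (Finset.mem_filter.mp hi).2.1
        exact (hEfacts i hsm).1
      have hsplit : ∑ i ∈ W, d i
          = ∑ e ∈ W.image Ei, ∑ i ∈ W.filter (fun i => Ei i = e), d i :=
        (Finset.sum_fiberwise_of_maps_to (fun i hi => Finset.mem_image_of_mem Ei hi) d).symm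
      have hfiber : ∀ e ∈ W.image Ei, ∑ i ∈ W.filter (fun i => Ei i = e), d i
          ≤ ((used s t (Xe e) (k:ℕ) : ℝ) / ((4*R:ℕ):ℝ) + 1) * (cm / 2^e) := by
        intro e he
        have hdle : ∀ i ∈ W.filter (fun i => Ei i = e), d i ≤ cm / 2^e := by
          intro i hi
          rw [Finset.mem_filter] at hi
          have hsm : SmallP i := (Finset.mem_filter.mp hi.1).2.1
          have := (hEfacts i hsm).2.1
          rwa [hi.2] at this
        have h1 : ∑ i ∈ W.filter (fun i => Ei i = e), d i
            ≤ (W.filter (fun i => Ei i = e)).card • (cm/2^e) :=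
          Finset.sum_le_card_nsmul _ _ _ hdle
        have hcardeq : (W.filter (fun i => Ei i = e)).card
            = cnt s t (Xe e) (G e) ρ₁ (k:ℕ) := by
          rw [cnt]
          apply congrArg Finset.card
          ext i
          rw [Finset.mem_filter, hWdef, Finset.mem_filter, Finset.mem_filter,
            hXe, Finset.mem_filter]
          constructor
          · rintro ⟨⟨hu, hsm, hgs1, hcov⟩, hei⟩
            refine ⟨⟨hu, hsm, hei⟩, ?_, hcov⟩
            rw [← hei]
            exact hgs1
          · rintro ⟨⟨hu, hsm, hei⟩, hg, hcov⟩
            refine ⟨⟨hu, hsm, ?_, hcov⟩, hei⟩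
            show G (Ei i) i = ρ₁
            rw [hei]
            exact hg
        have h2 := hG e ρ₁ (k:ℕ)
        have h2' : (4*R) * cnt s t (Xe e) (G e) ρ₁ (k:ℕ) ≤ used s t (Xe e) (k:ℕ) + 4*R :=
          le_trans h2 (by omega)
        have h3 : ((W.filter (fun i => Ei i = e)).card : ℝ)
            ≤ (used s t (Xe e) (k:ℕ) : ℝ) / ((4*R:ℕ):ℝ) + 1 := by
          rw [hcardeq]
          rw [div_add' _ _ _ (ne_of_gt hRpos), le_div_iff₀ hRpos]
          have h4 : ((4*R) * cnt s t (Xe e) (G e) ρ₁ (k:ℕ) : ℕ)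
              ≤ ((used s t (Xe e) (k:ℕ) + 4*R : ℕ)) := h2'
          have h5 : (((4*R) * cnt s t (Xe e) (G e) ρ₁ (k:ℕ) : ℕ) : ℝ)
              ≤ (((used s t (Xe e) (k:ℕ) + 4*R : ℕ)) : ℝ) := by exact_mod_cast h4
          push_cast at h5 ⊢
          linarith
        calc ∑ i ∈ W.filter (fun i => Ei i = e), d i
            ≤ (W.filter (fun i => Ei i = e)).card • (cm/2^e) := h1
          _ = ((W.filter (fun i => Ei i = e)).card : ℝ) * (cm/2^e) := nsmul_eq_mul _ _
          _ ≤ ((used s t (Xe e) (k:ℕ) : ℝ) / ((4*R:ℕ):ℝ) + 1) * (cm / 2^e) :=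
              mul_le_mul_of_nonneg_right h3 (by positivity)
      have hmain : ∑ i ∈ W, d i
          ≤ (∑ e ∈ W.image Ei, (used s t (Xe e) (k:ℕ) : ℝ) * (cm/2^e)) / ((4*R:ℕ):ℝ)
            + ∑ e ∈ W.image Ei, (cm/2^e) := by
        rw [hsplit]
        calc ∑ e ∈ W.image Ei, ∑ i ∈ W.filter (fun i => Ei i = e), d i
            ≤ ∑ e ∈ W.image Ei, ((used s t (Xe e) (k:ℕ) : ℝ) / ((4*R:ℕ):ℝ) + 1) * (cm / 2^e) :=
              Finset.sum_le_sum hfiber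
          _ = _ := by
              rw [Finset.sum_div, ← Finset.sum_add_distrib]
              apply Finset.sum_congr rfl
              intro e _
              ring
      -- piece 1
      have hused_eq : ∀ e, used s t (Xe e) (k:ℕ) = (V.filter (fun i => Ei i = e)).card := by
        intro e
        rw [used]
        apply congrArg Finset.card
        ext i
        rw [Finset.mem_filter, hXe, Finset.mem_filter, Finset.mem_filter, hVdef,
          Finset.mem_filter]
        tauto
      have hp1 : ∑ e ∈ W.image Ei, (used s t (Xe e) (k:ℕ):ℝ) * (cm/2^e)
          ≤ 2 * ((R:ℝ) * c k) := by
        have hterm : ∀ e ∈ W.image Ei, (used s t (Xe e) (k:ℕ):ℝ)*(cm/2^e)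
            ≤ ∑ i ∈ V.filter (fun i => Ei i = e), 2 * d i := by
          intro e he
          rw [hused_eq e]
          rw [show ((V.filter (fun i => Ei i = e)).card : ℝ) * (cm/2^e)
              = ∑ _i ∈ V.filter (fun i => Ei i = e), (cm/2^e) from by
            rw [Finset.sum_const, nsmul_eq_mul]]
          apply Finset.sum_le_sum
          intro i hi
          rw [Finset.mem_filter] at hi
          have hsm : SmallP i := (Finset.mem_filter.mp hi.1).2.1
          have := (hEfacts i hsm).2.2
          rw [hi.2] at this
          linarith
        have hsub : W.image Ei ⊆ V.image Ei := Finset.image_subset_image hWV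
        calc ∑ e ∈ W.image Ei, (used s t (Xe e) (k:ℕ):ℝ) * (cm/2^e)
            ≤ ∑ e ∈ W.image Ei, ∑ i ∈ V.filter (fun i => Ei i = e), 2 * d i :=
              Finset.sum_le_sum hterm
          _ ≤ ∑ e ∈ V.image Ei, ∑ i ∈ V.filter (fun i => Ei i = e), 2 * d i :=
              Finset.sum_le_sum_of_subset_of_nonneg hsub (fun e _ _ =>
                Finset.sum_nonneg (fun i _ => by linarith [hd i]))
          _ = ∑ i ∈ V, 2 * d i :=
              Finset.sum_fiberwise_of_maps_to (fun i hi => Finset.mem_image_of_mem Ei hi) _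
          _ = 2 * ∑ i ∈ V, d i := by rw [Finset.mul_sum]
          _ ≤ 2 * ((R:ℝ) * c k) := by
              have hVload : ∑ i ∈ V, d i ≤ load s t d k := by
                rw [load, show (∑ i : ι, if uses s t i k then d i else 0)
                    = ∑ i ∈ Finset.univ.filter (fun i => uses s t i k), d i from
                  (Finset.sum_filter _ _).symm]
                apply Finset.sum_le_sum_of_subset_of_nonneg
                · intro i hi
                  rw [hVdef, Finset.mem_filter] at hi
                  rw [Finset.mem_filter]
                  exact ⟨hi.1, hi.2.2.1, hi.2.2.2⟩
                · intro i _ _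
                  exact le_of_lt (hd i)
              linarith [hloadR k]
      -- piece 2
      have hp2 : ∑ e ∈ W.image Ei, (cm/2^e) ≤ cm/2 := by
        have h1 : ∀ e : ℕ, cm / 2^e = cm * ((1:ℝ)/2)^e := by
          intro e
          rw [div_pow, one_pow, mul_one_div]
        calc ∑ e ∈ W.image Ei, (cm/2^e)
            = cm * ∑ e ∈ W.image Ei, ((1:ℝ)/2)^e := by
              rw [Finset.mul_sum]
              exact Finset.sum_congr rfl (fun e _ => h1 e)
          _ ≤ cm * (1/2) := mul_le_mul_of_nonneg_left (geo _ hES2) (le_of_lt hcm_pos)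
          _ = cm / 2 := by ring
      -- assemble
      have hfin : (∑ e ∈ W.image Ei, (used s t (Xe e) (k:ℕ) : ℝ) * (cm/2^e)) / ((4*R:ℕ):ℝ)
          ≤ c k / 2 := by
        rw [div_le_iff₀ hRpos]
        have hcast : ((4*R:ℕ):ℝ) = 4 * (R:ℝ) := by push_cast; ring
        rw [hcast]
        have hR1' : (1:ℝ) ≤ (R:ℝ) := by exact_mod_cast hR1
        calc ∑ e ∈ W.image Ei, (used s t (Xe e) (k:ℕ) : ℝ) * (cm/2^e)
            ≤ 2*((R:ℝ)* c k) := hp1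
          _ ≤ c k/2 * (4*(R:ℝ)) := by nlinarith [hc k]
      calc ∑ i ∈ W, d i
          ≤ (∑ e ∈ W.image Ei, (used s t (Xe e) (k:ℕ) : ℝ) * (cm/2^e)) / ((4*R:ℕ):ℝ)
            + ∑ e ∈ W.image Ei, (cm/2^e) := hmain
        _ ≤ c k/2 + cm/2 := add_le_add hfin hp2
        _ ≤ c k/2 + c k/2 := by linarith [hcm_le k]
        _ = c k := by ring
    have hloadfilter : ∀ (X : Finset ι) (k : Fin m),
        ∑ i ∈ X.filter (fun i => s i ≤ (k:ℕ) ∧ (k:ℕ) < t i), d i ≤ load s t d k := by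
      intro X k
      rw [load, show (∑ i : ι, if uses s t i k then d i else 0)
          = ∑ i ∈ Finset.univ.filter (fun i => uses s t i k), d i from
        (Finset.sum_filter _ _).symm]
      apply Finset.sum_le_sum_of_subset_of_nonneg
      · intro i hi
        rw [Finset.mem_filter] at hi
        rw [Finset.mem_filter]
        exact ⟨Finset.mem_univ i, hi.2.1, hi.2.2⟩
      · intro i _ _
        exact le_of_lt (hd i)
    have hbig1_bound : ∀ (ρ₁ : Fin (4*R)) (k : Fin m),
        ∑ i ∈ Finset.univ.filter (fun i => ¬ MedP i ∧ g1 i = ρ₁ ∧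
          s i ≤ (k:ℕ) ∧ (k:ℕ) < t i), d i ≤ c k := by
      intro ρ₁ k
      have hWX : Finset.univ.filter (fun i => ¬ MedP i ∧ g1 i = ρ₁ ∧
            s i ≤ (k:ℕ) ∧ (k:ℕ) < t i)
          = X1.filter (fun i => g1 i = ρ₁ ∧ s i ≤ (k:ℕ) ∧ (k:ℕ) < t i) := by
        ext i
        rw [Finset.mem_filter, Finset.mem_filter, hX1, Finset.mem_filter]
        tauto
      rw [hWX]
      have hWcard : (X1.filter (fun i => g1 i = ρ₁ ∧ s i ≤ (k:ℕ) ∧ (k:ℕ) < t i)).card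
          = cnt s t X1 g1 ρ₁ (k:ℕ) := by rw [cnt]
      set n1 := used s t X1 (k:ℕ) with hn1def
      by_cases hn0 : n1 = 0
      · have hWempty : X1.filter (fun i => g1 i = ρ₁ ∧ s i ≤ (k:ℕ) ∧ (k:ℕ) < t i) = ∅ := by
          rw [← Finset.subset_empty]
          intro i hi
          exfalso
          have h1 : X1.filter (fun i => s i ≤ (k:ℕ) ∧ (k:ℕ) < t i) = ∅ := by
            rw [← Finset.card_eq_zero]
            rw [hn1def, used] at hn0
            exact hn0
          rw [Finset.mem_filter] at hi
          have : i ∈ X1.filter (fun i => s i ≤ (k:ℕ) ∧ (k:ℕ) < t i) :=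
            Finset.mem_filter.mpr ⟨hi.1, hi.2.2⟩
          rw [h1] at this
          exact absurd this (Finset.notMem_empty i)
        rw [hWempty, Finset.sum_empty]
        exact le_of_lt (hc k)
      · have hmemd : ∀ i ∈ X1, cm / 2 < d i := by
          intro i hi
          have h1 := (Finset.mem_filter.mp hi).2
          rw [hMedP] at h1
          exact not_le.mp h1
        have hX1ne : (X1.filter (fun i => s i ≤ (k:ℕ) ∧ (k:ℕ) < t i)).Nonempty := by
          rw [← Finset.card_pos, ← used]
          omega
        have hstrict : (n1:ℝ) * (cm/2)
            < ∑ i ∈ X1.filter (fun i => s i ≤ (k:ℕ) ∧ (k:ℕ) < t i), d i := by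
          have h0 : (n1:ℝ) * (cm/2)
              = ∑ _i ∈ X1.filter (fun i => s i ≤ (k:ℕ) ∧ (k:ℕ) < t i), (cm/2) := by
            rw [Finset.sum_const, nsmul_eq_mul, hn1def, used]
          rw [h0]
          exact Finset.sum_lt_sum_of_nonempty hX1ne
            (fun i hi => hmemd i (Finset.mem_filter.mp hi).1)
        set μ := ⌊c k / cm⌋₊ with hμdef
        have hμ1 : 1 ≤ μ := by
          apply Nat.le_floor
          rw [Nat.cast_one, le_div_iff₀ hcm_pos, one_mul]
          exact hcm_le k
        have hμu : (μ:ℝ) * cm ≤ c k := by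
          have h1 : (μ:ℝ) ≤ c k / cm := Nat.floor_le (le_of_lt (div_pos (hc k) hcm_pos))
          calc (μ:ℝ) * cm ≤ (c k / cm) * cm :=
                mul_le_mul_of_nonneg_right h1 (le_of_lt hcm_pos)
            _ = c k := div_mul_cancel₀ _ (ne_of_gt hcm_pos)
        have hμl : c k / cm < (μ:ℝ) + 1 := Nat.lt_floor_add_one _
        have hn1μ : n1 < 4*R*μ := by
          have hload1 := le_trans (hloadfilter X1 k) (hloadR k)
          have h2 : (n1:ℝ) * (cm/2) < (R:ℝ) * c k := lt_of_lt_of_le hstrict hload1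
          have hR1' : (1:ℝ) ≤ (R:ℝ) := by exact_mod_cast hR1
          have hμ1' : (1:ℝ) ≤ (μ:ℝ) := by exact_mod_cast hμ1
          have h3 : (n1:ℝ) < ((4*R*μ : ℕ):ℝ) := by
            push_cast
            have h4 : c k < ((μ:ℝ) + 1) * cm := (div_lt_iff₀ hcm_pos).mp hμl
            have h5 : (R:ℝ) * c k < (R:ℝ) * (((μ:ℝ)+1)*cm) :=
              mul_lt_mul_of_pos_left h4 (by linarith)
            have h6 : (n1:ℝ) * (cm/2) < (R:ℝ) * (((μ:ℝ)+1)*cm) := lt_trans h2 h5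
            have h7 : (n1:ℝ) < 2*(R:ℝ)*((μ:ℝ)+1) := by nlinarith [h6, hcm_pos]
            nlinarith [h7, hμ1', hR1']
          exact_mod_cast h3
        have hcnt : cnt s t X1 g1 ρ₁ (k:ℕ) ≤ μ :=
          divlem _ _ _ _ (by omega) (hg1 ρ₁ (k:ℕ)) hn1μ
        calc ∑ i ∈ X1.filter (fun i => g1 i = ρ₁ ∧ s i ≤ (k:ℕ) ∧ (k:ℕ) < t i), d i
            ≤ (X1.filter (fun i => g1 i = ρ₁ ∧ s i ≤ (k:ℕ) ∧ (k:ℕ) < t i)).card • cm :=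
              Finset.sum_le_card_nsmul _ _ _ (fun i _ => by
                rw [hcmdef] at *
                exact hnba i)
          _ = ((X1.filter (fun i => g1 i = ρ₁ ∧ s i ≤ (k:ℕ) ∧ (k:ℕ) < t i)).card : ℝ) * cm :=
              nsmul_eq_mul _ _
          _ ≤ (μ:ℝ) * cm := by
              apply mul_le_mul_of_nonneg_right _ (le_of_lt hcm_pos)
              rw [hWcard]
              exact_mod_cast hcnt
          _ ≤ c k := hμu
    have hbig2_bound : ∀ (ρ₁ : Fin (3*R)) (k : Fin m),
        ∑ i ∈ Finset.univ.filter (fun i => (¬ SmallP i ∧ MedP i) ∧ g2 i = ρ₁ ∧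
          s i ≤ (k:ℕ) ∧ (k:ℕ) < t i), d i ≤ c k := by
      intro ρ₁ k
      have hWX : Finset.univ.filter (fun i => (¬ SmallP i ∧ MedP i) ∧ g2 i = ρ₁ ∧
            s i ≤ (k:ℕ) ∧ (k:ℕ) < t i)
          = X2.filter (fun i => g2 i = ρ₁ ∧ s i ≤ (k:ℕ) ∧ (k:ℕ) < t i) := by
        ext i
        rw [Finset.mem_filter, Finset.mem_filter, hX2, Finset.mem_filter]
        tauto
      rw [hWX]
      have hWcard : (X2.filter (fun i => g2 i = ρ₁ ∧ s i ≤ (k:ℕ) ∧ (k:ℕ) < t i)).card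
          = cnt s t X2 g2 ρ₁ (k:ℕ) := by rw [cnt]
      set n2 := used s t X2 (k:ℕ) with hn2def
      by_cases hn0 : n2 = 0
      · have hWempty : X2.filter (fun i => g2 i = ρ₁ ∧ s i ≤ (k:ℕ) ∧ (k:ℕ) < t i) = ∅ := by
          rw [← Finset.subset_empty]
          intro i hi
          exfalso
          have h1 : X2.filter (fun i => s i ≤ (k:ℕ) ∧ (k:ℕ) < t i) = ∅ := by
            rw [← Finset.card_eq_zero]
            rw [hn2def, used] at hn0
            exact hn0
          rw [Finset.mem_filter] at hi
          have : i ∈ X2.filter (fun i => s i ≤ (k:ℕ) ∧ (k:ℕ) < t i) :=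
            Finset.mem_filter.mpr ⟨hi.1, hi.2.2⟩
          rw [h1] at this
          exact absurd this (Finset.notMem_empty i)
        rw [hWempty, Finset.sum_empty]
        exact le_of_lt (hc k)
      · have hmemd : ∀ i ∈ X2, cm / 4 < d i ∧ d i ≤ cm / 2 := by
          intro i hi
          have h1 := (Finset.mem_filter.mp hi).2
          rw [hSmallP, hMedP] at h1
          exact ⟨not_le.mp h1.1, h1.2⟩
        have hX2ne : (X2.filter (fun i => s i ≤ (k:ℕ) ∧ (k:ℕ) < t i)).Nonempty := by
          rw [← Finset.card_pos, ← used]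
          omega
        have hstrict : (n2:ℝ) * (cm/4)
            < ∑ i ∈ X2.filter (fun i => s i ≤ (k:ℕ) ∧ (k:ℕ) < t i), d i := by
          have h0 : (n2:ℝ) * (cm/4)
              = ∑ _i ∈ X2.filter (fun i => s i ≤ (k:ℕ) ∧ (k:ℕ) < t i), (cm/4) := by
            rw [Finset.sum_const, nsmul_eq_mul, hn2def, used]
          rw [h0]
          exact Finset.sum_lt_sum_of_nonempty hX2ne
            (fun i hi => (hmemd i (Finset.mem_filter.mp hi).1).1)
        set ν := ⌊2 * c k / cm⌋₊ with hνdef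
        have hν2 : 2 ≤ ν := by
          apply Nat.le_floor
          have : (2:ℝ) * cm ≤ 2 * c k := by linarith [hcm_le k]
          rw [le_div_iff₀ hcm_pos]
          push_cast
          linarith
        have hνu : (ν:ℝ) * cm ≤ 2 * c k := by
          have h1 : (ν:ℝ) ≤ 2 * c k / cm :=
            Nat.floor_le (le_of_lt (div_pos (by linarith [hc k]) hcm_pos))
          calc (ν:ℝ) * cm ≤ (2 * c k / cm) * cm :=
                mul_le_mul_of_nonneg_right h1 (le_of_lt hcm_pos)
            _ = 2 * c k := div_mul_cancel₀ _ (ne_of_gt hcm_pos)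
        have hνl : 2 * c k / cm < (ν:ℝ) + 1 := Nat.lt_floor_add_one _
        have hn2ν : n2 < 3*R*ν := by
          have hload2 := le_trans (hloadfilter X2 k) (hloadR k)
          have h2 : (n2:ℝ) * (cm/4) < (R:ℝ) * c k := lt_of_lt_of_le hstrict hload2
          have hR1' : (1:ℝ) ≤ (R:ℝ) := by exact_mod_cast hR1
          have hν2' : (2:ℝ) ≤ (ν:ℝ) := by exact_mod_cast hν2
          have h3 : (n2:ℝ) < ((3*R*ν : ℕ):ℝ) := by
            push_cast
            have h4 : 2 * c k < ((ν:ℝ) + 1) * cm := (div_lt_iff₀ hcm_pos).mp hνl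
            have h5 : (R:ℝ) * (2 * c k) < (R:ℝ) * (((ν:ℝ)+1)*cm) :=
              mul_lt_mul_of_pos_left h4 (by linarith)
            have h6 : (n2:ℝ) * (cm/2) < (R:ℝ) * (((ν:ℝ)+1)*cm) := by nlinarith [h2]
            have h7 : (n2:ℝ) < 2*(R:ℝ)*((ν:ℝ)+1) := by nlinarith [h6, hcm_pos]
            nlinarith [h7, hν2', hR1']
          exact_mod_cast h3
        have hcnt : cnt s t X2 g2 ρ₁ (k:ℕ) ≤ ν :=
          divlem _ _ _ _ (by omega) (hg2 ρ₁ (k:ℕ)) hn2ν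
        calc ∑ i ∈ X2.filter (fun i => g2 i = ρ₁ ∧ s i ≤ (k:ℕ) ∧ (k:ℕ) < t i), d i
            ≤ (X2.filter (fun i => g2 i = ρ₁ ∧ s i ≤ (k:ℕ) ∧ (k:ℕ) < t i)).card • (cm/2) :=
              Finset.sum_le_card_nsmul _ _ _ (fun i hi =>
                (hmemd i (Finset.mem_filter.mp hi).1).2)
          _ = ((X2.filter (fun i => g2 i = ρ₁ ∧ s i ≤ (k:ℕ) ∧ (k:ℕ) < t i)).card : ℝ) * (cm/2) :=
              nsmul_eq_mul _ _
          _ ≤ (ν:ℝ) * (cm/2) := by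
              apply mul_le_mul_of_nonneg_right _ (by linarith [hcm_pos])
              rw [hWcard]
              exact_mod_cast hcnt
          _ ≤ c k := by linarith [hνu]
    refine ⟨K, f, ?_, ?_, ?_⟩
    · omega
    · -- IsPacking
      intro ρ k
      rw [show (∑ i : ι, if f i = ρ ∧ uses s t i k then d i else 0)
          = ∑ i ∈ Finset.univ.filter (fun i => f i = ρ ∧ uses s t i k), d i from
          (Finset.sum_filter _ _).symm]
      have hρ11 : (ρ : ℕ) < 11 * R := by
        have := ρ.2
        omega
      by_cases hρ1 : (ρ:ℕ) < 4*R
      · have hfe : Finset.univ.filter (fun i => f i = ρ ∧ uses s t i k)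
            = Finset.univ.filter (fun i => SmallP i ∧ gs i = ⟨(ρ:ℕ), hρ1⟩ ∧
              s i ≤ (k:ℕ) ∧ (k:ℕ) < t i) := by
          ext i
          rw [Finset.mem_filter, Finset.mem_filter]
          constructor
          · rintro ⟨hu, hfi, hus⟩
            simp only [hf] at hfi
            by_cases hsm : SmallP i
            · rw [if_pos hsm] at hfi
              have hval := congrArg Fin.val hfi
              exact ⟨hu, hsm, Fin.ext hval, hus⟩
            · exfalso
              rw [if_neg hsm] at hfi
              by_cases hmed : MedP i
              · rw [if_pos hmed] at hfi
                have hval := congrArg Fin.val hfi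
                simp only at hval
                omega
              · rw [if_neg hmed] at hfi
                have hval := congrArg Fin.val hfi
                simp only at hval
                omega
          · rintro ⟨hu, hsm, hgse, hus⟩
            refine ⟨hu, ?_, hus⟩
            simp only [hf, if_pos hsm]
            apply Fin.ext
            simp only
            rw [hgse]
        rw [hfe]
        exact hsmall_bound ⟨(ρ:ℕ), hρ1⟩ k
      · by_cases hρ2 : (ρ:ℕ) < 7*R
        · have hb : (ρ:ℕ) - 4*R < 3*R := by omega
          have hfe : Finset.univ.filter (fun i => f i = ρ ∧ uses s t i k)
              = Finset.univ.filter (fun i => (¬ SmallP i ∧ MedP i) ∧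
                g2 i = ⟨(ρ:ℕ) - 4*R, hb⟩ ∧ s i ≤ (k:ℕ) ∧ (k:ℕ) < t i) := by
            ext i
            rw [Finset.mem_filter, Finset.mem_filter]
            constructor
            · rintro ⟨hu, hfi, hus⟩
              simp only [hf] at hfi
              by_cases hsm : SmallP i
              · exfalso
                rw [if_pos hsm] at hfi
                have hval := congrArg Fin.val hfi
                simp only at hval
                have := (gs i).2
                omega
              · rw [if_neg hsm] at hfi
                by_cases hmed : MedP i
                · rw [if_pos hmed] at hfi
                  have hval := congrArg Fin.val hfi
                  simp only at hval
                  refine ⟨hu, ⟨hsm, hmed⟩, Fin.ext ?_, hus⟩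
                  simp only
                  omega
                · exfalso
                  rw [if_neg hmed] at hfi
                  have hval := congrArg Fin.val hfi
                  simp only at hval
                  omega
            · rintro ⟨hu, ⟨hsm, hmed⟩, hg2e, hus⟩
              refine ⟨hu, ?_, hus⟩
              simp only [hf, if_neg hsm, if_pos hmed]
              apply Fin.ext
              simp only
              have hval := congrArg Fin.val hg2e
              simp only at hval
              omega
          rw [hfe]
          exact hbig2_bound ⟨(ρ:ℕ) - 4*R, hb⟩ k
        · have hb : (ρ:ℕ) - 7*R < 4*R := by omega
          have hfe : Finset.univ.filter (fun i => f i = ρ ∧ uses s t i k)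
              = Finset.univ.filter (fun i => ¬ MedP i ∧
                g1 i = ⟨(ρ:ℕ) - 7*R, hb⟩ ∧ s i ≤ (k:ℕ) ∧ (k:ℕ) < t i) := by
            ext i
            rw [Finset.mem_filter, Finset.mem_filter]
            constructor
            · rintro ⟨hu, hfi, hus⟩
              simp only [hf] at hfi
              by_cases hsm : SmallP i
              · exfalso
                rw [if_pos hsm] at hfi
                have hval := congrArg Fin.val hfi
                simp only at hval
                have := (gs i).2
                omega
              · rw [if_neg hsm] at hfi
                by_cases hmed : MedP i
                · exfalso
                  rw [if_pos hmed] at hfi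
                  have hval := congrArg Fin.val hfi
                  simp only at hval
                  have := (g2 i).2
                  omega
                · rw [if_neg hmed] at hfi
                  have hval := congrArg Fin.val hfi
                  simp only at hval
                  refine ⟨hu, hmed, Fin.ext ?_, hus⟩
                  simp only
                  omega
            · rintro ⟨hu, hmed, hg1e, hus⟩
              have hsm : ¬ SmallP i := by
                intro hsm
                apply hmed
                rw [hSmallP] at hsm
                rw [hMedP]
                linarith [hcm_pos]
              refine ⟨hu, ?_, hus⟩
              simp only [hf, if_neg hsm, if_neg hmed]
              apply Fin.ext
              simp only
              have hval := congrArg Fin.val hg1e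
              simp only at hval
              omega
          rw [hfe]
          exact hbig1_bound ⟨(ρ:ℕ) - 7*R, hb⟩ k
    · -- lower bound
      intro K' f' hpack
      have hrK' : r ≤ (K' : ℤ) := by
        have hload_split : ∀ k : Fin m, load s t d k ≤ (K' : ℝ) * c k := by
          intro k
          have hswap : load s t d k
              = ∑ ρ' : Fin K', ∑ i : ι, (if f' i = ρ' ∧ uses s t i k then d i else 0) := by
            rw [load, Finset.sum_comm]
            apply Finset.sum_congr rfl
            intro i _
            by_cases hu : uses s t i k
            · rw [if_pos hu]
              rw [Finset.sum_congr rfl (fun ρ' _ => by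
                rw [show (if f' i = ρ' ∧ uses s t i k then d i else 0)
                    = (if f' i = ρ' then d i else 0) by simp [hu]])]
              rw [Finset.sum_ite_eq]
              simp
            · rw [if_neg hu]
              rw [Finset.sum_congr rfl (fun ρ' _ => by
                rw [show (if f' i = ρ' ∧ uses s t i k then d i else 0) = 0 by simp [hu]])]
              simp
          rw [hswap]
          calc ∑ ρ' : Fin K', ∑ i : ι, (if f' i = ρ' ∧ uses s t i k then d i else 0)
              ≤ ∑ _ρ' : Fin K', c k := Finset.sum_le_sum (fun ρ' _ => hpack ρ' k)
            _ = (K' : ℝ) * c k := by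
                rw [Finset.sum_const, Finset.card_univ, Fintype.card_fin, nsmul_eq_mul]
        rw [hrdef, congestion]
        apply Finset.sup'_le
        intro k _
        have h1 : load s t d k / c k ≤ (K' : ℝ) := by
          rw [div_le_iff₀ (hc k)]
          exact hload_split k
        exact_mod_cast Int.ceil_le.mpr (by exact_mod_cast h1)
      have : R ≤ K' := by omega
      omega
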